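/- The group obtained from the presentation of G(D̃₄^{(1,1)}) by adding the quadratic relations t₀² = t₁² = 1 and sⱼ² = 1 for j ∈ {1,2,3,4} is isomorphic to the group obtained from the presentation of G'(D̃₄^{(1,1)}) by adding the quadratic relations tᵢ² = 1 for all i ∈ ℤ and sⱼ² = 1 for j ∈ {1,2,3,4} (both present the hyperbolic elliptic Weyl group Hyp(D̃₄^{(1,1)})). -/

import Mathlib

/-!
The maps `tᵢ ↦ tᵢ` (`i = 0, 1`) and `tᵢ ↦ (t₁ t₀)ⁱ t₀` are mutually inverse. Once the generators are
involutions, the relations `tᵢ tᵢ₋₁ = t₁ t₀` say that the `tᵢ` are the reflections `cⁱ t₀` of an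
infinite dihedral group with rotation `c = t₁ t₀`, each the conjugate of one neighbour by the other.
For involutions `a, b, s` such that `a` and `b` braid with `s`, the conjugate `b a b` braids with
`s` iff `s` and `a b` satisfy the braid relation of length four. Hence (P3) propagates the braid
relations from `t₀, t₁` to all `tᵢ`, and conversely the braid relation for `t₋₁ = t₀ t₁ t₀` gives
back (P3).
-/

namespace EllipticD4Hyp

abbrev GenG : Type := Fin 2 ⊕ Fin 4
abbrev GenG' : Type := ℤ ⊕ Fin 4

def tG (i : Fin 2) : FreeGroup GenG := FreeGroup.of (Sum.inl i)
def sG (j : Fin 4) : FreeGroup GenG := FreeGroup.of (Sum.inr j)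

/-- Relators of the elliptic Dynkin presentation of `G(D̃₄^{(1,1)})`. -/
def relsG : Set (FreeGroup GenG) :=
  { r | (∃ i j, r = (tG i * sG j * tG i)⁻¹ * (sG j * tG i * sG j)) ∨
        (∃ i j, i ≠ j ∧ r = (sG i * sG j)⁻¹ * (sG j * sG i)) ∨
        (∃ i, r = (sG i * tG 1 * tG 0 * sG i * tG 1 * tG 0)⁻¹ *
                  (tG 1 * tG 0 * sG i * tG 1 * tG 0 * sG i)) }

/-- Relators of the elliptic Dynkin presentation together with the quadratic relators
`t₀² = t₁² = 1` and `sⱼ² = 1` for `j ∈ {1,2,3,4}` (i.e. `g² = 1` for every generator). -/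
def relsHypG : Set (FreeGroup GenG) :=
  relsG ∪ { r | ∃ x : GenG, r = (FreeGroup.of x) ^ 2 }

def tG' (i : ℤ) : FreeGroup GenG' := FreeGroup.of (Sum.inl i)
def sG' (j : Fin 4) : FreeGroup GenG' := FreeGroup.of (Sum.inr j)

/-- Relators of the new presentation of `G'(D̃₄^{(1,1)})`. -/
def relsG' : Set (FreeGroup GenG') :=
  { r | (∃ i j, r = (tG' i * sG' j * tG' i)⁻¹ * (sG' j * tG' i * sG' j)) ∨
        (∃ i j, i ≠ j ∧ r = (sG' i * sG' j)⁻¹ * (sG' j * sG' i)) ∨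
        (∃ i j : ℤ, r = (tG' i * tG' (i - 1))⁻¹ * (tG' j * tG' (j - 1))) }

/-- Relators of the new presentation together with the quadratic relators
`tᵢ² = 1` for all `i ∈ ℤ` and `sⱼ² = 1` for `j ∈ {1,2,3,4}`. -/
def relsHypG' : Set (FreeGroup GenG') :=
  relsG' ∪ { r | ∃ x : GenG', r = (FreeGroup.of x) ^ 2 }

end EllipticD4Hyp

section Braid

variable {G : Type*} [Group G]

def Braid3 (a b : G) : Prop := a * b * a = b * a * b

def Braid4 (a b : G) : Prop := a * b * a * b = b * a * b * a

lemma braid4_inv_right_iff {s c : G} (hs : s * s = 1) : Braid4 s c⁻¹ ↔ Braid4 s c := by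
  rw [Braid4, Braid4, ← inv_inj, eq_comm]
  simp only [mul_inv_rev, inv_inv, inv_eq_of_mul_eq_one_right hs, mul_assoc]

lemma braid3_conj_iff {a b s : G} (ha : a * a = 1) (hs : s * s = 1)
    (has : Braid3 a s) (hbs : Braid3 b s) :
    Braid3 (b * a * b) s ↔ Braid4 s (a * b) := by
  unfold Braid3 at has hbs
  have hs' (x : G) : s * (s * x) = x := by rw [← mul_assoc, hs, one_mul]
  have ha' (x : G) : a * (a * x) = x := by rw [← mul_assoc, ha, one_mul]
  have has' (x : G) : s * (a * (s * x)) = a * (s * (a * x)) := by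
    rw [← mul_assoc, ← mul_assoc, ← has, mul_assoc, mul_assoc]
  have hbs' (x : G) : b * (s * (b * x)) = s * (b * (s * x)) := by
    rw [← mul_assoc, ← mul_assoc, hbs, mul_assoc, mul_assoc]
  have lhs : b * a * b * s * (b * a * b) = b * s * a * (s * (a * b) * s * (a * b)) := by
    simp only [mul_assoc]
    rw [← hs' (a * (b * (s * (b * (a * b))))), hbs', has']
  have rhs : s * (b * a * b) * s = b * s * a * (a * b * s * (a * b) * s) := by
    simp only [mul_assoc]
    rw [ha', hbs', hs']
  rw [Braid3, Braid4, lhs, rhs, mul_right_inj]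

structure IsReflectionChain (t : ℤ → G) (c : G) : Prop where
  mul_self : ∀ i, t i * t i = 1
  succ_mul : ∀ i, t (i + 1) * t i = c

namespace IsReflectionChain

variable {t : ℤ → G} {c : G}

lemma inv_apply (h : IsReflectionChain t c) (i : ℤ) : (t i)⁻¹ = t i :=
  inv_eq_of_mul_eq_one_right (h.mul_self i)

lemma apply_add_two (h : IsReflectionChain t c) (i : ℤ) :
    t (i + 2) = t (i + 1) * t i * t (i + 1) := by
  have := (h.succ_mul (i + 1)).trans (h.succ_mul i).symm
  rw [add_assoc, one_add_one_eq_two] at this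
  rw [← this, mul_assoc, h.mul_self, mul_one]

lemma apply_mul_apply_sub_one (h : IsReflectionChain t c) (i : ℤ) :
    t i * t (i - 1) = c := by
  simpa using h.succ_mul (i - 1)

lemma apply_sub_one (h : IsReflectionChain t c) (i : ℤ) :
    t (i - 1) = t i * t (i + 1) * t i := by
  have := (h.apply_mul_apply_sub_one i).trans (h.succ_mul i).symm
  rw [mul_assoc, ← this, ← mul_assoc, h.mul_self, one_mul]

lemma apply_add_one (h : IsReflectionChain t c) (i : ℤ) : t (i + 1) = c * t i := by
  rw [← h.succ_mul i, mul_assoc, h.mul_self, mul_one]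

lemma apply_eq_zpow_mul (h : IsReflectionChain t c) (i : ℤ) : t i = c ^ i * t 0 := by
  induction i using Int.induction_on with
  | zero => rw [zpow_zero, one_mul]
  | succ i ih => rw [h.apply_add_one, ih, ← mul_assoc, mul_self_zpow]
  | pred i ih =>
    apply mul_left_cancel (a := c)
    rw [← h.apply_add_one, sub_add_cancel, ih, ← mul_assoc, mul_self_zpow, sub_add_cancel]

lemma braid3_apply (h : IsReflectionChain t c) {s : G} (hs : s * s = 1) (h0 : Braid3 (t 0) s)
    (h1 : Braid3 (t 1) s) (hcs : Braid4 s c) (i : ℤ) : Braid3 (t i) s := by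
  have up (i : ℤ) (hi : Braid3 (t i) s) (hi1 : Braid3 (t (i + 1)) s) : Braid3 (t (i + 2)) s := by
    have hinv : t i * t (i + 1) = c⁻¹ := by
      rw [← h.succ_mul i, mul_inv_rev, h.inv_apply, h.inv_apply]
    rw [h.apply_add_two, braid3_conj_iff (h.mul_self i) hs hi hi1, hinv, braid4_inv_right_iff hs]
    exact hcs
  have down (i : ℤ) (hi : Braid3 (t i) s) (hi1 : Braid3 (t (i + 1)) s) :
      Braid3 (t (i - 1)) s := by
    rw [h.apply_sub_one, braid3_conj_iff (h.mul_self (i + 1)) hs hi1 hi, h.succ_mul]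
    exact hcs
  suffices ∀ i, Braid3 (t i) s ∧ Braid3 (t (i + 1)) s from (this i).1
  intro i
  induction i using Int.induction_on with
  | zero => exact ⟨h0, by rwa [zero_add]⟩
  | succ i ih => exact ⟨ih.2, by rw [add_assoc, one_add_one_eq_two]; exact up i ih.1 ih.2⟩
  | pred i ih => exact ⟨down _ ih.1 ih.2, by rw [sub_add_cancel]; exact ih.1⟩

end IsReflectionChain

lemma isReflectionChain_zpow_mul {a b : G} (ha : a * a = 1) (hb : b * b = 1) :
    IsReflectionChain (fun i => (b * a) ^ i * a) (b * a) := by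
  have ha' : a⁻¹ = a := inv_eq_of_mul_eq_one_right ha
  have hb' : b⁻¹ = b := inv_eq_of_mul_eq_one_right hb
  have hconj (i : ℤ) : a * (b * a) ^ i * a = (b * a) ^ (-i) := by
    calc a * (b * a) ^ i * a = (a * (b * a) * a⁻¹) ^ i := by rw [conj_zpow, ha']
      _ = (b * a) ^ (-i) := by
        rw [← mul_assoc a b a, mul_inv_cancel_right, zpow_neg, ← inv_zpow, mul_inv_rev, ha',
          hb']
  refine ⟨fun i => ?_, fun i => ?_⟩
  · rw [mul_assoc, ← mul_assoc a, hconj, ← zpow_add, add_neg_cancel, zpow_zero]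
  · rw [mul_assoc, ← mul_assoc a, hconj, ← zpow_add, add_neg_cancel_comm, zpow_one]

end Braid

lemma FreeGroup.lift_eq_lift_of_inv_mul_mem {α H : Type*} [Group H] {rels : Set (FreeGroup α)}
    {f : α → H} (h : ∀ r ∈ rels, FreeGroup.lift f r = 1) {u v : FreeGroup α}
    (huv : u⁻¹ * v ∈ rels) : FreeGroup.lift f u = FreeGroup.lift f v := by
  simpa [inv_mul_eq_one] using h _ huv

lemma PresentedGroup.lift_of_eq_one {α : Type*} {rels : Set (FreeGroup α)} {r : FreeGroup α}
    (hr : r ∈ rels) : FreeGroup.lift PresentedGroup.of r = (1 : PresentedGroup rels) := by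
  rw [show FreeGroup.lift PresentedGroup.of = PresentedGroup.mk rels from
    FreeGroup.ext_hom _ _ fun _ => rfl]
  exact PresentedGroup.one_of_mem hr

namespace EllipticD4Hyp

variable {H : Type*} [Group H]

structure SatisfiesRelsHypG (t : Fin 2 → H) (s : Fin 4 → H) : Prop where
  t_mul_self : ∀ i, t i * t i = 1
  s_mul_self : ∀ j, s j * s j = 1
  braid3 : ∀ i j, Braid3 (t i) (s j)
  commute : ∀ i j, i ≠ j → Commute (s i) (s j)
  braid4 : ∀ j, Braid4 (s j) (t 1 * t 0)

structure SatisfiesRelsHypG' (t : ℤ → H) (s : Fin 4 → H) : Prop where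
  t_mul_self : ∀ i, t i * t i = 1
  s_mul_self : ∀ j, s j * s j = 1
  braid3 : ∀ i j, Braid3 (t i) (s j)
  commute : ∀ i j, i ≠ j → Commute (s i) (s j)
  mul_pred : ∀ i j, t i * t (i - 1) = t j * t (j - 1)

lemma lift_relsHypG_eq_one_iff {t : Fin 2 → H} {s : Fin 4 → H} :
    (∀ r ∈ relsHypG, FreeGroup.lift (Sum.elim t s) r = 1) ↔ SatisfiesRelsHypG t s := by
  constructor
  · intro h
    have hsq (x : GenG) : FreeGroup.lift (Sum.elim t s) (FreeGroup.of x) ^ 2 = 1 := by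
      simpa using h _ (Or.inr ⟨x, rfl⟩)
    refine ⟨fun i => ?_, fun j => ?_, fun i j => ?_, fun i j hij => ?_, fun j => ?_⟩
    · simpa [pow_two] using hsq (.inl i)
    · simpa [pow_two] using hsq (.inr j)
    · simpa [tG, sG, Braid3] using
        FreeGroup.lift_eq_lift_of_inv_mul_mem h (Or.inl (Or.inl ⟨i, j, rfl⟩))
    · simpa [sG, Commute, SemiconjBy] using
        FreeGroup.lift_eq_lift_of_inv_mul_mem h (Or.inl (Or.inr (Or.inl ⟨i, j, hij, rfl⟩)))
    · simpa [tG, sG, Braid4, mul_assoc] using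
        FreeGroup.lift_eq_lift_of_inv_mul_mem h (Or.inl (Or.inr (Or.inr ⟨j, rfl⟩)))
  · rintro ⟨ht, hs, h3, hc, h4⟩ r
      ((⟨i, j, rfl⟩ | ⟨i, j, hij, rfl⟩ | ⟨j, rfl⟩) | ⟨i | j, rfl⟩) <;>
      simp only [tG, sG, map_mul, map_inv, FreeGroup.lift_apply_of, Sum.elim_inl,
        Sum.elim_inr, inv_mul_eq_one, pow_two]
    · exact h3 i j
    · exact hc i j hij
    · simpa only [Braid4, mul_assoc] using h4 j
    · exact ht i
    · exact hs j

lemma lift_relsHypG'_eq_one_iff {t : ℤ → H} {s : Fin 4 → H} :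
    (∀ r ∈ relsHypG', FreeGroup.lift (Sum.elim t s) r = 1) ↔ SatisfiesRelsHypG' t s := by
  constructor
  · intro h
    have hsq (x : GenG') : FreeGroup.lift (Sum.elim t s) (FreeGroup.of x) ^ 2 = 1 := by
      simpa using h _ (Or.inr ⟨x, rfl⟩)
    refine ⟨fun i => ?_, fun j => ?_, fun i j => ?_, fun i j hij => ?_, fun i j => ?_⟩
    · simpa [pow_two] using hsq (.inl i)
    · simpa [pow_two] using hsq (.inr j)
    · simpa [tG', sG', Braid3] using
        FreeGroup.lift_eq_lift_of_inv_mul_mem h (Or.inl (Or.inl ⟨i, j, rfl⟩))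
    · simpa [sG', Commute, SemiconjBy] using
        FreeGroup.lift_eq_lift_of_inv_mul_mem h (Or.inl (Or.inr (Or.inl ⟨i, j, hij, rfl⟩)))
    · simpa [tG'] using
        FreeGroup.lift_eq_lift_of_inv_mul_mem h (Or.inl (Or.inr (Or.inr ⟨i, j, rfl⟩)))
  · rintro ⟨ht, hs, h3, hc, hp⟩ r
      ((⟨i, j, rfl⟩ | ⟨i, j, hij, rfl⟩ | ⟨i, j, rfl⟩) | ⟨i | j, rfl⟩) <;>
      simp only [tG', sG', map_mul, map_inv, FreeGroup.lift_apply_of, Sum.elim_inl,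
        Sum.elim_inr, inv_mul_eq_one, pow_two]
    · exact h3 i j
    · exact hc i j hij
    · exact hp i j
    · exact ht i
    · exact hs j

lemma SatisfiesRelsHypG'.isReflectionChain {t : ℤ → H} {s : Fin 4 → H}
    (h : SatisfiesRelsHypG' t s) : IsReflectionChain t (t 1 * t 0) where
  mul_self := h.t_mul_self
  succ_mul i := by simpa using h.mul_pred (i + 1) 1

lemma SatisfiesRelsHypG'.toSatisfiesRelsHypG {t : ℤ → H} {s : Fin 4 → H}
    (h : SatisfiesRelsHypG' t s) : SatisfiesRelsHypG (fun i : Fin 2 => t (i : ℕ)) s where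
  t_mul_self i := h.t_mul_self i
  s_mul_self := h.s_mul_self
  braid3 i := h.braid3 i
  commute := h.commute
  braid4 j := by
    have hpred : t (-1) = t 0 * t 1 * t 0 := by simpa using h.isReflectionChain.apply_sub_one 0
    simpa [← braid3_conj_iff (h.t_mul_self 1) (h.s_mul_self j) (h.braid3 1 j) (h.braid3 0 j),
      ← hpred] using h.braid3 (-1) j

lemma SatisfiesRelsHypG.toSatisfiesRelsHypG' {t : Fin 2 → H} {s : Fin 4 → H}
    (h : SatisfiesRelsHypG t s) : SatisfiesRelsHypG' (fun i => (t 1 * t 0) ^ i * t 0) s := by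
  have hchain := isReflectionChain_zpow_mul (h.t_mul_self 0) (h.t_mul_self 1)
  refine ⟨hchain.mul_self, h.s_mul_self, fun i j => ?_, h.commute, fun i j => ?_⟩
  · refine hchain.braid3_apply (h.s_mul_self j) ?_ ?_ (h.braid4 j) i
    · simpa using h.braid3 0 j
    · simpa [mul_assoc, h.t_mul_self 0] using h.braid3 1 j
  · exact (hchain.apply_mul_apply_sub_one i).trans (hchain.apply_mul_apply_sub_one j).symm

lemma satisfiesRelsHypG_of :
    SatisfiesRelsHypG (PresentedGroup.of (rels := relsHypG) ∘ Sum.inl)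
      (PresentedGroup.of ∘ Sum.inr) :=
  lift_relsHypG_eq_one_iff.1 fun _ hr => by
    rw [Sum.elim_comp_inl_inr]; exact PresentedGroup.lift_of_eq_one hr

lemma satisfiesRelsHypG'_of :
    SatisfiesRelsHypG' (PresentedGroup.of (rels := relsHypG') ∘ Sum.inl)
      (PresentedGroup.of ∘ Sum.inr) :=
  lift_relsHypG'_eq_one_iff.1 fun _ hr => by
    rw [Sum.elim_comp_inl_inr]; exact PresentedGroup.lift_of_eq_one hr

theorem Hyp_iso : Nonempty (PresentedGroup relsHypG ≃* PresentedGroup relsHypG') := by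
  let φ := PresentedGroup.toGroup
    (lift_relsHypG_eq_one_iff.2 satisfiesRelsHypG'_of.toSatisfiesRelsHypG)
  let ψ := PresentedGroup.toGroup
    (lift_relsHypG'_eq_one_iff.2 satisfiesRelsHypG_of.toSatisfiesRelsHypG')
  refine ⟨MonoidHom.toMulEquiv φ ψ ?_ ?_⟩
  · refine PresentedGroup.ext fun x => ?_
    rcases x with i | j
    · fin_cases i
      · simp [φ, ψ]
      · simpa [φ, ψ, mul_assoc] using satisfiesRelsHypG_of.t_mul_self 0
    · simp [φ, ψ]
  · refine PresentedGroup.ext fun x => ?_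
    rcases x with i | j
    · simpa [φ, ψ] using (satisfiesRelsHypG'_of.isReflectionChain.apply_eq_zpow_mul i).symm
    · simp [φ, ψ]

end EllipticD4Hyp
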